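/- Let X be a chi-squared random variable with d degrees of freedom. Then for any 0 < ε < 1, P(X ≥ (1+ε)d) ≤ exp(−d(ε² − ε³)/4) and P(X ≤ (1−ε)d) ≤ exp(−d(ε² − ε³)/4). -/

import Mathlib

/-!
Chernoff's method. For `t < 1 / 2` the Gaussian integral gives `E[exp (t Z²)] = (1 - 2t)^(-1/2)`,
so `X ∼ χ²(d)` has moment generating function `(1 - 2t)^(-d/2)`. Taking `t = (1 - a⁻¹) / 2` yields
`P(X ≥ a d) ≤ exp (-d (a - 1 - log a) / 2)` for `a ≥ 1` and the same bound for `P(X ≤ a d)` when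
`a ≤ 1`. The rate is at least `(ε² - ε³) / 2` at `a = 1 ± ε`, because
`log (1 + ε) ≤ ε - (ε² - ε³) / 2` and `log (1 - ε) ≤ -ε - ε² / 2`.
-/

open MeasureTheory ProbabilityTheory

/-- The chi-squared distribution with `d` degrees of freedom: the law of the sum of
squares of `d` i.i.d. standard normal random variables. -/
noncomputable def chiSquared (d : ℕ) : Measure ℝ :=
  Measure.map (fun ω : Fin d → ℝ => ∑ i, (ω i) ^ 2)
    (Measure.pi fun _ => gaussianReal 0 1)

open Real

lemma gaussianPDFReal_mul_exp_mul_sq (t x : ℝ) :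
    gaussianPDFReal 0 1 x * exp (t * x ^ 2) = (√(2 * π))⁻¹ * exp (-(1 / 2 - t) * x ^ 2) := by
  rw [gaussianPDFReal, mul_assoc, ← exp_add]
  push_cast
  ring_nf

lemma integrable_exp_mul_sq_gaussianReal {t : ℝ} (ht : t < 1 / 2) :
    Integrable (fun x => exp (t * x ^ 2)) (gaussianReal 0 1) := by
  rw [gaussianReal_of_var_ne_zero 0 one_ne_zero,
    integrable_withDensity_iff_integrable_smul' (measurable_gaussianPDF 0 1)
      (ae_of_all _ fun _ => gaussianPDF_lt_top)]
  simp only [toReal_gaussianPDF, smul_eq_mul, gaussianPDFReal_mul_exp_mul_sq]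
  exact (integrable_exp_neg_mul_sq (by linarith)).const_mul _

/-- For `t ≥ 1 / 2` both sides are junk `0`. -/
lemma integral_exp_mul_sq_gaussianReal (t : ℝ) :
    ∫ x, exp (t * x ^ 2) ∂gaussianReal 0 1 = (√(1 - 2 * t))⁻¹ := by
  simp only [integral_gaussianReal_eq_integral_smul one_ne_zero, smul_eq_mul,
    gaussianPDFReal_mul_exp_mul_sq, integral_const_mul, integral_gaussian]
  rw [← sqrt_inv, ← sqrt_mul (by positivity), ← sqrt_inv]
  congr 1
  field_simp

lemma measurable_sum_sq (ι : Type*) [Fintype ι] :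
    Measurable fun ω : ι → ℝ => ∑ i, ω i ^ 2 := by
  fun_prop

instance isProbabilityMeasure_chiSquared (d : ℕ) : IsProbabilityMeasure (chiSquared d) :=
  Measure.isProbabilityMeasure_map (measurable_sum_sq (Fin d)).aemeasurable

lemma exp_mul_sum_sq {ι : Type*} [Fintype ι] (t : ℝ) (ω : ι → ℝ) :
    exp (t * ∑ i, ω i ^ 2) = ∏ i, exp (t * ω i ^ 2) := by
  rw [Finset.mul_sum, exp_sum]

lemma integrable_exp_mul_chiSquared (d : ℕ) {t : ℝ} (ht : t < 1 / 2) :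
    Integrable (fun x => exp (t * x)) (chiSquared d) := by
  rw [chiSquared, integrable_map_measure (by fun_prop) (measurable_sum_sq (Fin d)).aemeasurable]
  simp only [Function.comp_def, exp_mul_sum_sq]
  exact Integrable.fintype_prod fun _ => integrable_exp_mul_sq_gaussianReal ht

lemma mgf_chiSquared (d : ℕ) (t : ℝ) :
    mgf id (chiSquared d) t = (√(1 - 2 * t))⁻¹ ^ d := by
  rw [mgf, chiSquared, integral_map (measurable_sum_sq (Fin d)).aemeasurable (by fun_prop)]
  simp only [id, exp_mul_sum_sq]
  rw [integral_fintype_prod_eq_pow (fun x => exp (t * x ^ 2)), integral_exp_mul_sq_gaussianReal,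
    Fintype.card_fin]

/-- The Chernoff bound at its optimal parameter `t = (1 - a⁻¹) / 2`. -/
lemma exp_mul_mgf_chiSquared_at_optimum (d : ℕ) {a : ℝ} (ha : 0 < a) :
    exp (-((1 - a⁻¹) / 2) * (a * d)) * mgf id (chiSquared d) ((1 - a⁻¹) / 2)
      = exp (-d * (a - 1 - log a) / 2) := by
  have h : 1 - 2 * ((1 - a⁻¹) / 2) = a⁻¹ := by ring
  rw [mgf_chiSquared, h, sqrt_inv, inv_inv,
    ← exp_log (sqrt_pos.mpr ha), log_sqrt ha.le, ← exp_nat_mul, ← exp_add]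
  congr 1
  field_simp
  ring

lemma chiSquared_upper_tail_le (d : ℕ) {a : ℝ} (ha : 1 ≤ a) :
    chiSquared d {x | a * d ≤ x} ≤ ENNReal.ofReal (exp (-d * (a - 1 - log a) / 2)) := by
  have ha0 : 0 < a := by linarith
  rw [← ofReal_measureReal, ← exp_mul_mgf_chiSquared_at_optimum d ha0]
  refine ENNReal.ofReal_le_ofReal (measure_ge_le_exp_mul_mgf _ ?_ ?_)
  · linarith [inv_le_one_of_one_le₀ ha]
  · exact integrable_exp_mul_chiSquared d (by linarith [inv_pos.mpr ha0])

lemma chiSquared_lower_tail_le (d : ℕ) {a : ℝ} (ha0 : 0 < a) (ha : a ≤ 1) :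
    chiSquared d {x | x ≤ a * d} ≤ ENNReal.ofReal (exp (-d * (a - 1 - log a) / 2)) := by
  rw [← ofReal_measureReal, ← exp_mul_mgf_chiSquared_at_optimum d ha0]
  refine ENNReal.ofReal_le_ofReal (measure_le_le_exp_mul_mgf _ ?_ ?_)
  · linarith [one_le_inv₀ ha0 |>.mpr ha]
  · exact integrable_exp_mul_chiSquared d (by linarith [inv_pos.mpr ha0])

lemma log_one_add_le_cubic {x : ℝ} (hx : 0 ≤ x) : log (1 + x) ≤ x - (x ^ 2 - x ^ 3) / 2 := by
  rw [log_le_iff_le_exp (by linarith)]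
  -- `1 + y + y ^ 2 / 2 ≤ exp y` at `y = x - (x ^ 2 - x ^ 3) / 2`, and `y ^ 2 ≥ (x - x ^ 2 / 2) ^ 2`
  refine le_trans ?_ (quadratic_le_exp_of_nonneg (x := x - (x ^ 2 - x ^ 3) / 2) (by nlinarith))
  nlinarith [pow_nonneg hx 3, pow_nonneg hx 4]

lemma log_one_sub_le_quadratic {x : ℝ} (hx0 : 0 ≤ x) (hx1 : x < 1) :
    log (1 - x) ≤ -x - x ^ 2 / 2 := by
  have hseries := hasSum_pow_div_log_of_abs_lt_one (abs_lt.mpr ⟨by linarith, hx1⟩)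
  have hpartial := sum_le_hasSum (Finset.range 2) (fun n _ => by positivity) hseries
  norm_num [Finset.sum_range_succ] at hpartial
  linarith

/-- Concentration of the chi-squared distribution: if `X ∼ χ²(d)` then for `0 < ε < 1`,
`P(X ≥ (1+ε)d) ≤ exp(−d(ε² − ε³)/4)` and `P(X ≤ (1−ε)d) ≤ exp(−d(ε² − ε³)/4)`. -/
theorem chiSquared_tail_bounds (d : ℕ) (ε : ℝ) (hε0 : 0 < ε) (hε1 : ε < 1) :
    chiSquared d {x | (1 + ε) * d ≤ x}
      ≤ ENNReal.ofReal (Real.exp (-(d : ℝ) * (ε ^ 2 - ε ^ 3) / 4)) ∧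
    chiSquared d {x | x ≤ (1 - ε) * d}
      ≤ ENNReal.ofReal (Real.exp (-(d : ℝ) * (ε ^ 2 - ε ^ 3) / 4)) := by
  have rate_bound : ∀ a : ℝ, (ε ^ 2 - ε ^ 3) / 2 ≤ a - 1 - log a →
      ENNReal.ofReal (exp (-d * (a - 1 - log a) / 2))
        ≤ ENNReal.ofReal (exp (-d * (ε ^ 2 - ε ^ 3) / 4)) := fun a ha =>
    ENNReal.ofReal_le_ofReal <| exp_le_exp.mpr <| by nlinarith [d.cast_nonneg (α := ℝ)]
  constructor
  · refine (chiSquared_upper_tail_le d (by linarith)).trans (rate_bound _ ?_)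
    linarith [log_one_add_le_cubic hε0.le]
  · refine (chiSquared_lower_tail_le d (by linarith) (by linarith)).trans (rate_bound _ ?_)
    linarith [log_one_sub_le_quadratic hε0.le hε1, pow_pos hε0 3]
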